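/- arXiv:0810.0933 — 9 statements merged into one kernel-verified Lean document; each statement's English description precedes it below -/
import Mathlib

section
/- Let f : ℝ≥0 → ℝ≥0 be defined by f(x) = x² if x is irrational and f(x) = c²·x² if x is rational, where c is a fixed positive rational with c ≠ 1. Then f is injective. -/
theorem costas_indicator_injective
    (c : ℚ) (hc : 0 < c) (hc1 : c ≠ 1) (f : ℝ → ℝ)
    (hfq : ∀ x : ℝ, ¬ Irrational x → f x = (c : ℝ)^2 * x^2)
    (hfi : ∀ x : ℝ, Irrational x → f x = x^2) :
    Set.InjOn f (Set.Ici (0 : ℝ)) := by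
  have hcR : (0:ℝ) < (c:ℝ) := by exact_mod_cast hc
  intro x hx y hy hxy
  simp only [Set.mem_Ici] at hx hy
  by_cases hxI : Irrational x <;> by_cases hyI : Irrational y
  · rw [hfi x hxI, hfi y hyI] at hxy
    exact (sq_eq_sq₀ hx hy).mp hxy
  · -- x irrational, y rational
    rw [hfi x hxI, hfq y hyI] at hxy
    obtain ⟨q, hq⟩ := not_not.mp hyI
    exfalso
    have hxy2 : x = (c:ℝ) * y := by
      nlinarith [mul_nonneg hcR.le hy, sq_nonneg (x - (c:ℝ)*y), sq_nonneg (x + (c:ℝ)*y)]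
    apply hxI
    rw [hxy2, ← hq]
    exact ⟨c * q, by push_cast; ring⟩
  · rw [hfq x hxI, hfi y hyI] at hxy
    obtain ⟨q, hq⟩ := not_not.mp hxI
    exfalso
    have hxy2 : y = (c:ℝ) * x := by
      nlinarith [mul_nonneg hcR.le hx, sq_nonneg (y - (c:ℝ)*x), sq_nonneg (y + (c:ℝ)*x)]
    apply hyI
    rw [hxy2, ← hq]
    exact ⟨c * q, by push_cast; ring⟩
  · rw [hfq x hxI, hfq y hyI] at hxy
    have hc2 : ((c:ℝ)^2) ≠ 0 := by positivity
    have h2 : x^2 = y^2 := mul_left_cancel₀ hc2 hxy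
    exact (sq_eq_sq₀ hx hy).mp h2
end

section
/- Let f : ℝ≥0 → ℝ≥0 be defined by f(x) = x² if x is irrational and f(x) = c²·x² if x is rational, where c is a fixed positive rational with c ≠ 1. Then for all x, y ∈ ℝ≥0 and all positive rational z, if f(x+z) − f(x) = f(y+z) − f(y) then x = y. -/
/-!
Translation by a rational `z` preserves rationality. If `x` and `y` are both rational or both
irrational, the two increments are `a z (2x + z)` and `a z (2y + z)` with the same `a ≠ 0`, so
`x = y`. If `x` is irrational and `y` rational, the increment at `x` is `2 z x + z²`, which is
irrational, while the increment at `y` is rational.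
-/

theorem add_sq_sub_sq_injective {z : ℝ} (hz : z ≠ 0) :
    Function.Injective fun x : ℝ => (x + z) ^ 2 - x ^ 2 := by
  intro x y h
  have h2 : (2 * z) * x = (2 * z) * y := by linear_combination h
  exact mul_left_cancel₀ (mul_ne_zero two_ne_zero hz) h2

theorem Irrational.add_sq_sub_sq {x : ℝ} (hx : Irrational x) {z : ℚ} (hz : z ≠ 0) :
    Irrational ((x + z) ^ 2 - x ^ 2) := by
  have h : (x + z) ^ 2 - x ^ 2 = ((2 * z : ℚ) : ℝ) * x + ((z ^ 2 : ℚ) : ℝ) := by push_cast; ring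
  rw [h]
  exact (hx.ratCast_mul (mul_ne_zero two_ne_zero hz)).add_ratCast _

theorem not_irrational_mul_add_sq_sub_sq {x : ℝ} (hx : ¬Irrational x) (c z : ℚ) :
    ¬Irrational ((c : ℝ) ^ 2 * ((x + z) ^ 2 - x ^ 2)) := by
  obtain ⟨q, rfl⟩ := not_not.mp hx
  exact not_not.mpr ⟨c ^ 2 * ((q + z) ^ 2 - q ^ 2), by push_cast; ring⟩

section

variable {c : ℚ} {f : ℝ → ℝ} {x : ℝ}

theorem sub_eq_of_irrational (hfi : ∀ x : ℝ, Irrational x → f x = x ^ 2) (hx : Irrational x)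
    (z : ℚ) : f (x + z) - f x = (x + z) ^ 2 - x ^ 2 := by
  rw [hfi _ hx, hfi _ (hx.add_ratCast z)]

theorem sub_eq_of_not_irrational (hfq : ∀ x : ℝ, ¬Irrational x → f x = (c : ℝ) ^ 2 * x ^ 2)
    (hx : ¬Irrational x) (z : ℚ) : f (x + z) - f x = (c : ℝ) ^ 2 * ((x + z) ^ 2 - x ^ 2) := by
  rw [hfq _ hx, hfq _ (mt irrational_add_ratCast_iff.mp hx)]
  ring

end

theorem costas_indicator_costas_property_general
    (c : ℚ) (hc : 0 < c) (f : ℝ → ℝ)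
    (hfq : ∀ x : ℝ, ¬ Irrational x → f x = (c : ℝ)^2 * x^2)
    (hfi : ∀ x : ℝ, Irrational x → f x = x^2) :
    ∀ x ∈ Set.Ici (0 : ℝ), ∀ y ∈ Set.Ici (0 : ℝ), ∀ z : ℚ, 0 < z →
      f (x + z) - f x = f (y + z) - f y → x = y := by
  intro x _ y _ z hz heq
  have hz0 : (z : ℝ) ≠ 0 := by exact_mod_cast hz.ne'
  by_cases hx : Irrational x <;> by_cases hy : Irrational y
  · rw [sub_eq_of_irrational hfi hx, sub_eq_of_irrational hfi hy] at heq
    exact add_sq_sub_sq_injective hz0 heq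
  · rw [sub_eq_of_irrational hfi hx, sub_eq_of_not_irrational hfq hy] at heq
    exact absurd (heq ▸ hx.add_sq_sub_sq hz.ne') (not_irrational_mul_add_sq_sub_sq hy c z)
  · rw [sub_eq_of_not_irrational hfq hx, sub_eq_of_irrational hfi hy] at heq
    exact absurd (heq ▸ hy.add_sq_sub_sq hz.ne') (not_irrational_mul_add_sq_sub_sq hx c z)
  · rw [sub_eq_of_not_irrational hfq hx, sub_eq_of_not_irrational hfq hy] at heq
    have hc2 : (c : ℝ) ^ 2 ≠ 0 := by positivity
    exact add_sq_sub_sq_injective hz0 (mul_left_cancel₀ hc2 heq)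

theorem costas_indicator_costas_property
    (c : ℚ) (hc : 0 < c) (hc1 : c ≠ 1) (f : ℝ → ℝ)
    (hfq : ∀ x : ℝ, ¬ Irrational x → f x = (c : ℝ)^2 * x^2)
    (hfi : ∀ x : ℝ, Irrational x → f x = x^2) :
    ∀ x ∈ Set.Ici (0 : ℝ), ∀ y ∈ Set.Ici (0 : ℝ), ∀ z : ℚ, 0 < z →
      f (x + z) - f x = f (y + z) - f y → x = y :=
  costas_indicator_costas_property_general c hc f hfq hfi
end

section
/- If f : ℝ → ℝ satisfies Cauchy's functional equation and is not of the form f(x) = c·x for any constant c, then the graph of f, i.e. {(x, f(x)) : x ∈ ℝ}, is dense in ℝ². -/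
/-!
An additive `f : ℝ → ℝ` is `ℚ`-linear, so its graph contains every rational combination of
`(1, f 1)` and `(a, f a)`. If `f a ≠ f 1 * a` these two vectors form a real basis of `ℝ²`, and the
real linear isomorphism `ℝ² → ℝ²` they define maps the dense set `ℚ²` onto a dense set.
-/

open Set Submodule

theorem dense_range_ratCast_linearCombination {E : Type*} [NormedAddCommGroup E]
    [NormedSpace ℝ E] [FiniteDimensional ℝ E] {ι : Type*} [Fintype ι] {v : ι → E}
    (hv : span ℝ (range v) = ⊤) :
    Dense (range fun q : ι → ℚ => ∑ i, (q i : ℝ) • v i) := by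
  set T := Fintype.linearCombination ℝ v
  have hT : Function.Surjective T := by
    rw [← LinearMap.range_eq_top, Fintype.range_linearCombination, hv]
  have hrat : DenseRange fun q : ι → ℚ => fun i => (q i : ℝ) :=
    DenseRange.piMap fun _ => Rat.denseRange_cast
  convert hT.denseRange.dense_image T.continuous_of_finiteDimensional hrat using 1
  rw [← range_comp]
  rfl

theorem linearIndependent_pair_of_det_ne_zero {K : Type*} [Field K] {x₁ y₁ x₂ y₂ : K}
    (hdet : x₁ * y₂ - x₂ * y₁ ≠ 0) : LinearIndependent K ![(x₁, y₁), (x₂, y₂)] := by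
  rw [LinearIndependent.pair_iff]
  intro s t hst
  simp only [Prod.smul_mk, smul_eq_mul, Prod.mk_add_mk, Prod.mk_eq_zero] at hst
  obtain ⟨hx, hy⟩ := hst
  have hs : s * (x₁ * y₂ - x₂ * y₁) = 0 := by linear_combination y₂ * hx - x₂ * hy
  have ht : t * (x₁ * y₂ - x₂ * y₁) = 0 := by linear_combination x₁ * hy - y₁ * hx
  exact ⟨(mul_eq_zero.1 hs).resolve_right hdet, (mul_eq_zero.1 ht).resolve_right hdet⟩

theorem sum_ratCast_smul_mem_range_graph {f : ℝ → ℝ} (hf : ∀ x y, f (x + y) = f x + f y)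
    {ι : Type*} [Fintype ι] (q : ι → ℚ) (x : ι → ℝ) :
    ∑ i, (q i : ℝ) • (x i, f (x i)) ∈ range fun x => (x, f x) := by
  let F : ℝ →+ ℝ := AddMonoidHom.mk' f hf
  have hF : ∀ y, F y = f y := fun _ => rfl
  have hlin : f (∑ i, (q i : ℝ) • x i) = ∑ i, (q i : ℝ) • f (x i) := by
    simp only [← hF, map_sum, map_ratCast_smul F ℝ ℝ]
  refine ⟨∑ i, (q i : ℝ) • x i, ?_⟩
  ext
  · simp [Prod.fst_sum]
  · simpa [Prod.snd_sum] using hlin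

theorem cauchy_nonlinear_dense_graph
    (f : ℝ → ℝ) (hf : ∀ x y : ℝ, f (x + y) = f x + f y)
    (hnl : ¬ ∃ c : ℝ, ∀ x : ℝ, f x = c * x) :
    Dense (Set.range fun x : ℝ => (x, f x)) := by
  push Not at hnl
  obtain ⟨a, ha⟩ := hnl (f 1)
  have hindep : LinearIndependent ℝ ![((1 : ℝ), f 1), (a, f a)] :=
    linearIndependent_pair_of_det_ne_zero (by rwa [one_mul, sub_ne_zero, mul_comm])
  have hspan : span ℝ (range ![((1 : ℝ), f 1), (a, f a)]) = ⊤ :=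
    hindep.span_eq_top_of_card_eq_finrank' (by simp)
  refine (dense_range_ratCast_linearCombination hspan).mono ?_
  rintro _ ⟨q, rfl⟩
  convert sum_ratCast_smul_mem_range_graph hf q ![1, a] using 3 with i
  fin_cases i <;> rfl
end

section
/- Let g : ℝ → (0,∞) be injective with g(x+y) = g(x)·g(y) for all x, y, and suppose g maps (0,1) into (0,∞). Define h = g/(1+g) on (0,1). Then for all x, y ∈ (0,1) and d > 0 with x+d, y+d ∈ (0,1), if h(x+d) − h(x) = h(y+d) − h(y) then x = y. -/
theorem costas_cloud_mobius_transform
    (g : ℝ → ℝ) (hgpos : ∀ x : ℝ, 0 < g x)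
    (hgmul : ∀ x y : ℝ, g (x + y) = g x * g y)
    (hginj : Function.Injective g)
    (h : ℝ → ℝ) (hh : ∀ x : ℝ, h x = g x / (1 + g x)) :
    ∀ x ∈ Set.Ioo (0 : ℝ) 1, ∀ y ∈ Set.Ioo (0 : ℝ) 1, ∀ d : ℝ, 0 < d →
      x + d ∈ Set.Ioo (0 : ℝ) 1 → y + d ∈ Set.Ioo (0 : ℝ) 1 →
      h (x + d) - h x = h (y + d) - h y → x = y := by
  have hg0 : g 0 = 1 := by
    have h0 := hgmul 0 0
    simp only [add_zero] at h0
    nlinarith [hgpos 0]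
  intro x hx y hy d hd hxd hyd heq
  have hgd : g d ≠ 1 := by
    intro h1
    have : d = 0 := hginj (by rw [h1, hg0])
    linarith
  have hne : g x * g y * g d ≠ 1 := by
    intro h1
    have hs : g (x + y + d) = g x * g y * g d := by
      rw [hgmul, hgmul]
    have : x + y + d = 0 := hginj (by rw [hs, h1, hg0])
    have := hx.1; have := hy.1; linarith
  have px := hgpos x; have py := hgpos y; have pd := hgpos d
  have pxd := hgpos (x + d); have pyd := hgpos (y + d)
  rw [hh, hh, hh, hh, hgmul, hgmul] at heq
  have d1 : (1 : ℝ) + g x * g d ≠ 0 := by positivity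
  have d2 : (1 : ℝ) + g x ≠ 0 := by positivity
  have d3 : (1 : ℝ) + g y * g d ≠ 0 := by positivity
  have d4 : (1 : ℝ) + g y ≠ 0 := by positivity
  field_simp at heq
  have key : (g x - g y) * ((g d - 1) * (1 - g x * g y * g d)) = 0 := by
    nlinarith [heq]
  rcases mul_eq_zero.mp key with h1 | h2
  · exact hginj (by linarith)
  · rcases mul_eq_zero.mp h2 with h3 | h4
    · exact absurd (by linarith : g d = 1) hgd
    · exact absurd (by linarith : g x * g y * g d = 1) hne
end

section
/- Let f : ℝ → ℝ be a bijective solution of Cauchy's functional equation, and let g : ℝ* → ℝ be defined implicitly (where possible) by exp(g(x)) + exp(f(x)) = 1, i.e. g(x) = ln(1 − exp(f(x))) for x with f(x) < 0. Then for all x, y in the domain of g and all z ≠ 0 with x+z, y+z in the domain, if g(x+z) − g(x) = g(y+z) − g(y) then x = y. -/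
theorem generalized_golomb_construction
    (f : ℝ → ℝ) (hf : ∀ x y : ℝ, f (x + y) = f x + f y)
    (hbij : Function.Bijective f)
    (g : ℝ → ℝ) (hg : ∀ x : ℝ, f x < 0 → g x = Real.log (1 - Real.exp (f x))) :
    ∀ x y z : ℝ, z ≠ 0 → f x < 0 → f y < 0 → f (x + z) < 0 → f (y + z) < 0 →
      g (x + z) - g x = g (y + z) - g y → x = y := by
  intro x y z hz hx hy hxz hyz heq
  have hf0 : f 0 = 0 := by
    have := hf 0 0; simpa using this.symm
  set a := Real.exp (f x) with ha
  set b := Real.exp (f y) with hb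
  set c := Real.exp (f z) with hc
  have ha1 : a < 1 := by rw [ha]; exact Real.exp_lt_one_iff.mpr hx
  have hb1 : b < 1 := by rw [hb]; exact Real.exp_lt_one_iff.mpr hy
  have hac : a * c < 1 := by
    have := Real.exp_lt_one_iff.mpr hxz
    rwa [hf, Real.exp_add] at this
  have hbc : b * c < 1 := by
    have := Real.exp_lt_one_iff.mpr hyz
    rwa [hf, Real.exp_add] at this
  have hap : 0 < 1 - a := by linarith
  have hbp : 0 < 1 - b := by linarith
  have hacp : 0 < 1 - a * c := by linarith
  have hbcp : 0 < 1 - b * c := by linarith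
  rw [hg x hx, hg y hy, hg _ hxz, hg _ hyz, hf, hf, Real.exp_add, Real.exp_add] at heq
  have key : (1 - a * c) * (1 - b) = (1 - b * c) * (1 - a) := by
    have h1 : Real.log ((1 - a * c) / (1 - a)) = Real.log ((1 - b * c) / (1 - b)) := by
      rw [Real.log_div hacp.ne' hap.ne', Real.log_div hbcp.ne' hbp.ne']
      linarith
    have h2 : (1 - a * c) / (1 - a) = (1 - b * c) / (1 - b) :=
      Real.log_injOn_pos.eq_iff (Set.mem_Ioi.mpr (by positivity))
        (Set.mem_Ioi.mpr (by positivity)) |>.mp h1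
    field_simp at h2
    linarith
  have hc1 : c ≠ 1 := by
    intro h
    apply hz
    have : f z = 0 := by
      have h' : Real.exp (f z) = Real.exp 0 := by simpa [Real.exp_zero, ← hc] using h
      exact Real.exp_injective h'
    exact hbij.injective (by rw [this, hf0])
  have : (a - b) * (1 - c) = 0 := by ring_nf; nlinarith [key]
  have hab : a = b := by
    rcases mul_eq_zero.mp this with h | h
    · linarith
    · exact absurd (by linarith : c = 1) hc1
  exact hbij.injective (Real.exp_injective (by rw [← ha, ← hb, hab]))
end

section
/- There exists an uncountable subset S of ℝ that is a Sidon set, i.e. for all x₁, x₂, x₃, x₄ ∈ S, x₁ + x₂ = x₃ + x₄ implies {x₁, x₂} = {x₃, x₄}. -/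
/-! A Hamel basis of `ℝ` over `ℚ` is such a set. It is uncountable because `ℝ` is and `ℚ` is
countable, and among basis vectors `a + b = c + d` is a relation with coefficients in `ℕ`, which
linear independence only allows when it pairs the two sides up. -/

theorem LinearIndepOn.pair_eq_pair_of_add_eq_add {M : Type*} [AddCommMonoid M] {s : Set M}
    (hs : LinearIndepOn ℕ id s) {a b c d : M} (ha : a ∈ s) (hb : b ∈ s) (hc : c ∈ s)
    (hd : d ∈ s) (h : a + b = c + d) : ({a, b} : Set M) = {c, d} := by
  have key := @hs (.single ⟨a, ha⟩ 1 + .single ⟨b, hb⟩ 1) (.single ⟨c, hc⟩ 1 + .single ⟨d, hd⟩ 1)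
    (by simpa using h)
  rw [Finsupp.single_add_single_eq_single_add_single one_ne_zero one_ne_zero] at key
  rw [Set.pair_eq_pair_iff]
  simpa using key

theorem Module.Basis.uncountable_index {ι R M : Type*} [Semiring R] [AddCommMonoid M]
    [Module R M] [Countable R] [Uncountable M] (b : Basis ι R M) : Uncountable ι := by
  by_contra hι
  rw [not_uncountable_iff] at hι
  exact not_countable (b.repr.injective.countable)

theorem exists_uncountable_sidon_set :
    ∃ S : Set ℝ, ¬ S.Countable ∧
      ∀ x₁ ∈ S, ∀ x₂ ∈ S, ∀ x₃ ∈ S, ∀ x₄ ∈ S,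
        x₁ + x₂ = x₃ + x₄ → ({x₁, x₂} : Set ℝ) = {x₃, x₄} := by
  refine ⟨Module.Basis.ofVectorSpaceIndex ℚ ℝ, ?_, fun a ha b hb c hc d hd ↦ ?_⟩
  · exact not_countable_iff.mpr (Module.Basis.ofVectorSpace ℚ ℝ).uncountable_index
  · exact LinearIndepOn.pair_eq_pair_of_add_eq_add
      ((Module.Basis.ofVectorSpaceIndex.linearIndependent ℚ ℝ).restrict_scalars' ℕ) ha hb hc hd
end

section
/- For every prime p, the set of integers {2pk + (k² mod p) : k = 0, 1, …, p−1} is a Sidon set: all pairwise sums of (not necessarily distinct) elements are distinct up to order. -/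
lemma erdos_turan_key (p : ℕ) (hp : p.Prime) (a b c d : ℕ)
    (ha : a < p) (hb : b < p) (hc : c < p) (hd : d < p)
    (hsum : a + b = c + d)
    (hres : a ^ 2 % p + b ^ 2 % p = c ^ 2 % p + d ^ 2 % p) :
    (a = c ∧ b = d) ∨ (a = d ∧ b = c) := by
  rcases hp.eq_two_or_odd' with h2 | hodd
  · subst h2; omega
  · haveI : Fact p.Prime := ⟨hp⟩
    have hZ1 : (a : ZMod p) + b = c + d := by exact_mod_cast congrArg (Nat.cast : ℕ → ZMod p) hsum
    have hZ2 : (a : ZMod p) ^ 2 + b ^ 2 = c ^ 2 + d ^ 2 := by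
      have := congrArg (Nat.cast : ℕ → ZMod p) hres
      push_cast [ZMod.natCast_mod] at this
      exact this
    have h2ne : (2 : ZMod p) ≠ 0 := by
      intro h
      have : ((2 : ℕ) : ZMod p) = 0 := by exact_mod_cast h
      have hdvd := (ZMod.natCast_eq_zero_iff 2 p).mp this
      have hp2 := (Nat.prime_dvd_prime_iff_eq hp Nat.prime_two).mp hdvd
      rcases hodd with ⟨k, hk⟩
      omega
    have h2ab : (2 : ZMod p) * ((a : ZMod p) * b) = 2 * ((c : ZMod p) * d) := by
      linear_combination hZ1 * ((a : ZMod p) + b + c + d) - hZ2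
    have hab : (a : ZMod p) * b = (c : ZMod p) * d := mul_left_cancel₀ h2ne h2ab
    have hfact : ((a : ZMod p) - c) * ((a : ZMod p) - d) = 0 := by
      linear_combination (a : ZMod p) * hZ1 - hab
    have natEq : ∀ x y : ℕ, x < p → y < p → (x : ZMod p) = y → x = y := by
      intro x y hx hy hxy
      have := congrArg ZMod.val hxy
      rwa [ZMod.val_cast_of_lt hx, ZMod.val_cast_of_lt hy] at this
    rcases mul_eq_zero.mp hfact with h | h
    · left
      have hac : a = c := natEq a c ha hc (sub_eq_zero.mp h)
      exact ⟨hac, by omega⟩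
    · right
      have had : a = d := natEq a d ha hd (sub_eq_zero.mp h)
      exact ⟨had, by omega⟩

theorem erdos_turan_sidon (p : ℕ) (hp : p.Prime) :
    ∀ x₁ ∈ (fun k : ℕ => 2 * p * k + (k ^ 2 % p)) '' {k | k < p},
    ∀ x₂ ∈ (fun k : ℕ => 2 * p * k + (k ^ 2 % p)) '' {k | k < p},
    ∀ x₃ ∈ (fun k : ℕ => 2 * p * k + (k ^ 2 % p)) '' {k | k < p},
    ∀ x₄ ∈ (fun k : ℕ => 2 * p * k + (k ^ 2 % p)) '' {k | k < p},
      x₁ + x₂ = x₃ + x₄ → ({x₁, x₂} : Set ℕ) = {x₃, x₄} := by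
  rintro x₁ ⟨a, ha, rfl⟩ x₂ ⟨b, hb, rfl⟩ x₃ ⟨c, hc, rfl⟩ x₄ ⟨d, hd, rfl⟩ h
  simp only [Set.mem_setOf_eq] at ha hb hc hd
  have hp0 : 0 < p := hp.pos
  have hra : a ^ 2 % p < p := Nat.mod_lt _ hp0
  have hrb : b ^ 2 % p < p := Nat.mod_lt _ hp0
  have hrc : c ^ 2 % p < p := Nat.mod_lt _ hp0
  have hrd : d ^ 2 % p < p := Nat.mod_lt _ hp0
  have h2 : 2 * p * (a + b) + (a ^ 2 % p + b ^ 2 % p)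
      = 2 * p * (c + d) + (c ^ 2 % p + d ^ 2 % p) := by ring_nf; ring_nf at h; linarith
  have h2p : 0 < 2 * p := by omega
  have hL : (2 * p * (a + b) + (a ^ 2 % p + b ^ 2 % p)) / (2 * p) = a + b := by
    rw [Nat.mul_add_div h2p, Nat.div_eq_of_lt (by omega), Nat.add_zero]
  have hR : (2 * p * (c + d) + (c ^ 2 % p + d ^ 2 % p)) / (2 * p) = c + d := by
    rw [Nat.mul_add_div h2p, Nat.div_eq_of_lt (by omega), Nat.add_zero]
  have hsum : a + b = c + d := by rw [← hL, h2, hR]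
  have hres : a ^ 2 % p + b ^ 2 % p = c ^ 2 % p + d ^ 2 % p := by
    rw [hsum] at h2; omega
  rcases erdos_turan_key p hp a b c d ha hb hc hd hsum hres with ⟨rfl, rfl⟩ | ⟨rfl, rfl⟩
  · rfl
  · exact Set.pair_comm _ _
end

section
/- Let p be a prime, α a primitive root modulo p, and c an integer with 0 ≤ c ≤ p−2. Then the map f : {1,…,p−1} → {1,…,p−1}, f(i) = α^(i−1+c) mod p, is a bijection satisfying the Costas property: for all i, j, and all t with 1 ≤ t ≤ p−2 such that i+t, j+t ≤ p−1, if f(i+t) − f(i) = f(j+t) − f(j) then i = j. -/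
/-! Modulo `p`, `f i` is the power `α ^ (i - 1 + c)`, so injectivity comes from the
injectivity of `k ↦ α ^ k` on `k < p - 1`. In the field `ZMod p` the difference
`f (i + t) - f i` is `α ^ (i - 1 + c) * (α ^ t - 1)` with `α ^ t ≠ 1` for `0 < t < p - 1`,
so it determines `i` as well. -/

namespace IsPrimitiveRoot

variable {M : Type*} {ζ : M} {n a b : ℕ}

theorem pow_add_right_inj [CommMonoid M] (h : IsPrimitiveRoot ζ n) (ha : a < n) (hb : b < n)
    (c : ℕ) (hab : ζ ^ (a + c) = ζ ^ (b + c)) : a = b := by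
  have hunit : IsUnit (ζ ^ c) := (h.isUnit (by omega)).pow c
  rw [pow_add, pow_add] at hab
  exact h.pow_inj ha hb (hunit.mul_left_injective hab)

theorem pow_add_sub_pow_inj [CommRing M] [IsDomain M] (h : IsPrimitiveRoot ζ n)
    (ha : a < n) (hb : b < n) {t : ℕ} (ht : t ≠ 0) (htn : t < n) (c : ℕ)
    (hab : ζ ^ (a + t + c) - ζ ^ (a + c) = ζ ^ (b + t + c) - ζ ^ (b + c)) : a = b := by
  have hfactor : (ζ ^ (a + c) - ζ ^ (b + c)) * (ζ ^ t - 1) = 0 := by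
    rw [add_right_comm a, add_right_comm b, pow_add _ (a + c), pow_add _ (b + c)] at hab
    linear_combination hab
  have hζt : ζ ^ t - 1 ≠ 0 := sub_ne_zero.mpr (h.pow_ne_one_of_pos_of_lt ht htn)
  exact h.pow_add_right_inj ha hb c (sub_eq_zero.mp ((mul_eq_zero.mp hfactor).resolve_right hζt))

end IsPrimitiveRoot

theorem Nat.mod_mem_Icc_of_natCast_ne_zero {p m : ℕ} (hp : p ≠ 0) (hm : (m : ZMod p) ≠ 0) :
    m % p ∈ Set.Icc 1 (p - 1) := by
  have hpos : m % p ≠ 0 := fun h =>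
    hm ((ZMod.natCast_eq_zero_iff m p).mpr (Nat.dvd_of_mod_eq_zero h))
  have hlt : m % p < p := Nat.mod_lt m (by omega)
  exact ⟨by omega, by omega⟩

theorem welch_costas_general (p : ℕ) (hp : p.Prime) (α : ℕ)
    (hα : IsPrimitiveRoot (α : ZMod p) (p - 1))
    (c : ℕ)
    (f : ℕ → ℕ) (hf : ∀ i : ℕ, f i = α ^ (i - 1 + c) % p) :
    Set.BijOn f (Set.Icc 1 (p - 1)) (Set.Icc 1 (p - 1)) ∧
      (∀ i ∈ Set.Icc 1 (p - 1), ∀ j ∈ Set.Icc 1 (p - 1), ∀ t : ℕ,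
        1 ≤ t → t ≤ p - 2 → i + t ≤ p - 1 → j + t ≤ p - 1 →
        (f (i + t) : ℤ) - f i = (f (j + t) : ℤ) - f j → i = j) := by
  have : Fact p.Prime := ⟨hp⟩
  have hp2 := hp.two_le
  have hfz (i : ℕ) : (f i : ZMod p) = (α : ZMod p) ^ (i - 1 + c) := by
    rw [hf, ZMod.natCast_mod, Nat.cast_pow]
  have hmaps : Set.MapsTo f (Set.Icc 1 (p - 1)) (Set.Icc 1 (p - 1)) := fun i _ => by
    rw [hf]
    refine Nat.mod_mem_Icc_of_natCast_ne_zero hp.ne_zero ?_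
    rw [Nat.cast_pow]
    exact ((hα.isUnit (by omega)).pow _).ne_zero
  have hinj : Set.InjOn f (Set.Icc 1 (p - 1)) := fun i ⟨hi1, hi2⟩ j ⟨hj1, hj2⟩ hij => by
    have hz := congrArg (Nat.cast : ℕ → ZMod p) hij
    rw [hfz, hfz] at hz
    have := hα.pow_add_right_inj (by omega) (by omega) c hz
    omega
  refine ⟨((Set.finite_Icc _ _).injOn_iff_bijOn_of_mapsTo hmaps).mp hinj, ?_⟩
  rintro i ⟨hi1, hi2⟩ j ⟨hj1, hj2⟩ t ht1 ht2 hit hjt hdiff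
  have hz := congrArg (Int.cast : ℤ → ZMod p) hdiff
  push_cast [hfz] at hz
  rw [show i + t - 1 = i - 1 + t by omega, show j + t - 1 = j - 1 + t by omega] at hz
  have := hα.pow_add_sub_pow_inj (by omega) (by omega) (by omega) (by omega) c hz
  omega

theorem welch_costas (p : ℕ) (hp : p.Prime) (α : ℕ)
    (hα : IsPrimitiveRoot (α : ZMod p) (p - 1))
    (c : ℕ) (hc : c ≤ p - 2)
    (f : ℕ → ℕ) (hf : ∀ i : ℕ, f i = α ^ (i - 1 + c) % p) :
    Set.BijOn f (Set.Icc 1 (p - 1)) (Set.Icc 1 (p - 1)) ∧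
      (∀ i ∈ Set.Icc 1 (p - 1), ∀ j ∈ Set.Icc 1 (p - 1), ∀ t : ℕ,
        1 ≤ t → t ≤ p - 2 → i + t ≤ p - 1 → j + t ≤ p - 1 →
        (f (i + t) : ℤ) - f i = (f (j + t) : ℤ) - f j → i = j) :=
  welch_costas_general p hp α hα c f hf
end

section
/- For any positive integer n and a ∈ {1, 2}, the set {a·n·k² + k : k = 0, 1, …, n−1} is a Sidon set: x₁ + x₂ = x₃ + x₄ with all xᵢ in the set implies {x₁, x₂} = {x₃, x₄}. -/
set_option maxHeartbeats 1000000

theorem always_applicable_golomb_ruler (n : ℕ) (hn : 0 < n) (a : ℕ)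
    (ha : a = 1 ∨ a = 2) :
    ∀ x₁ ∈ (fun k : ℕ => a * n * k ^ 2 + k) '' {k | k < n},
    ∀ x₂ ∈ (fun k : ℕ => a * n * k ^ 2 + k) '' {k | k < n},
    ∀ x₃ ∈ (fun k : ℕ => a * n * k ^ 2 + k) '' {k | k < n},
    ∀ x₄ ∈ (fun k : ℕ => a * n * k ^ 2 + k) '' {k | k < n},
      x₁ + x₂ = x₃ + x₄ → ({x₁, x₂} : Set ℕ) = {x₃, x₄} := by
  rintro x₁ ⟨k₁, hk₁, rfl⟩ x₂ ⟨k₂, hk₂, rfl⟩ x₃ ⟨k₃, hk₃, rfl⟩ x₄ ⟨k₄, hk₄, rfl⟩ h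
  simp only [Set.mem_setOf_eq] at hk₁ hk₂ hk₃ hk₄
  have key : (k₁ = k₃ ∧ k₂ = k₄) ∨ (k₁ = k₄ ∧ k₂ = k₃) := by
    have hn' : (1 : ℤ) ≤ (n : ℤ) := by exact_mod_cast hn
    have b₁ : (k₁ : ℤ) < n := by exact_mod_cast hk₁
    have b₂ : (k₂ : ℤ) < n := by exact_mod_cast hk₂
    have b₃ : (k₃ : ℤ) < n := by exact_mod_cast hk₃
    have b₄ : (k₄ : ℤ) < n := by exact_mod_cast hk₄
    have p₁ : (0 : ℤ) ≤ (k₁ : ℤ) := Int.ofNat_nonneg _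
    have p₂ : (0 : ℤ) ≤ (k₂ : ℤ) := Int.ofNat_nonneg _
    have p₃ : (0 : ℤ) ≤ (k₃ : ℤ) := Int.ofNat_nonneg _
    have p₄ : (0 : ℤ) ≤ (k₄ : ℤ) := Int.ofNat_nonneg _
    have h' : (a : ℤ) * n * (k₁:ℤ) ^ 2 + k₁ + ((a : ℤ) * n * (k₂:ℤ) ^ 2 + k₂)
        = (a : ℤ) * n * (k₃:ℤ) ^ 2 + k₃ + ((a : ℤ) * n * (k₄:ℤ) ^ 2 + k₄) := by
      exact_mod_cast h
    have hA : (a : ℤ) = 1 ∨ (a : ℤ) = 2 := by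
      rcases ha with rfl | rfl
      · left; norm_num
      · right; norm_num
    -- general step: if the squares are strictly smaller on side 1, contradiction
    have main : ∀ x₁ x₂ x₃ x₄ : ℤ, 0 ≤ x₁ → 0 ≤ x₂ → 0 ≤ x₃ → 0 ≤ x₄ →
        x₁ < n → x₂ < n → x₃ < n → x₄ < n →
        ((a:ℤ) * n * x₁ ^ 2 + x₁ + ((a:ℤ) * n * x₂ ^ 2 + x₂)
          = (a:ℤ) * n * x₃ ^ 2 + x₃ + ((a:ℤ) * n * x₄ ^ 2 + x₄)) →
        x₁ ^ 2 + x₂ ^ 2 < x₃ ^ 2 + x₄ ^ 2 → False := by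
      intro x₁ x₂ x₃ x₄ q₁ q₂ q₃ q₄ c₁ c₂ c₃ c₄ he hlt
      set d : ℤ := x₃ ^ 2 + x₄ ^ 2 - (x₁ ^ 2 + x₂ ^ 2) with hd
      have hd1 : 1 ≤ d := by omega
      have h2 : (a:ℤ) * n * d = (x₁ + x₂) - (x₃ + x₄) := by
        rw [hd]; linear_combination -he
      have hub : (a:ℤ) * n * d ≤ 2 * n - 2 := by
        rw [h2]; linarith
      rcases hA with ha' | ha'
      · rw [ha'] at hub h2
        have hd2 : d < 2 := by
          by_contra hc
          push_neg at hc
          have : (n:ℤ) * 2 ≤ n * d :=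
            mul_le_mul_of_nonneg_left hc (by linarith)
          linarith [this, hub]
        have hdeq : d = 1 := by omega
        rw [hdeq] at h2
        have hs1 : x₁ + x₂ = n + (x₃ + x₄) := by linarith
        have hq1 : x₃ ^ 2 + x₄ ^ 2 = x₁ ^ 2 + x₂ ^ 2 + 1 := by
          rw [hdeq] at hd; linarith
        nlinarith [sq_nonneg (x₁ - x₂), mul_nonneg q₃ q₄,
          mul_nonneg (add_nonneg q₃ q₄) (by linarith : (0:ℤ) ≤ 2*n - 2 - (x₃ + x₄))]
      · rw [ha'] at hub
        have : (2 * (n:ℤ)) * 1 ≤ 2 * n * d :=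
          mul_le_mul_of_nonneg_left hd1 (by linarith)
        linarith [this, hub]
    have hq : (k₁:ℤ) ^ 2 + (k₂:ℤ) ^ 2 = (k₃:ℤ) ^ 2 + (k₄:ℤ) ^ 2 := by
      rcases lt_trichotomy ((k₁:ℤ) ^ 2 + (k₂:ℤ) ^ 2) ((k₃:ℤ) ^ 2 + (k₄:ℤ) ^ 2)
        with hlt | heq | hgt
      · exact (main _ _ _ _ p₁ p₂ p₃ p₄ b₁ b₂ b₃ b₄ h' hlt).elim
      · exact heq
      · exact (main _ _ _ _ p₃ p₄ p₁ p₂ b₃ b₄ b₁ b₂ h'.symm hgt).elim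
    have hs : (k₁:ℤ) + k₂ = (k₃:ℤ) + k₄ := by linear_combination h' - (a:ℤ)*(n:ℤ)*hq
    have hz2 : 2 * (((k₁:ℤ) - k₃) * ((k₁:ℤ) - k₄)) = 0 := by
      linear_combination ((k₁:ℤ) - k₂ - k₃ - k₄) * hs + hq
    have hz : ((k₁:ℤ) - k₃) * ((k₁:ℤ) - k₄) = 0 := by linarith
    rcases mul_eq_zero.mp hz with h0 | h0
    · left
      have e1 : (k₁:ℤ) = k₃ := by linarith
      have e2 : (k₂:ℤ) = k₄ := by linarith
      exact ⟨Nat.cast_inj.mp e1, Nat.cast_inj.mp e2⟩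
    · right
      have e1 : (k₁:ℤ) = k₄ := by linarith
      have e2 : (k₂:ℤ) = k₃ := by linarith
      exact ⟨Nat.cast_inj.mp e1, Nat.cast_inj.mp e2⟩
  rcases key with ⟨rfl, rfl⟩ | ⟨rfl, rfl⟩
  · rfl
  · exact Set.pair_comm _ _
end
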